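/- With notation as in the context, fix an injective homomorphism θ: ℤ/ℓ → k̄^× and an element a ∈ ℤ/ℓ such that (h − 1)a ≠ 0 in ℤ/ℓ for every h ∈ H with h ≠ 1, and such that there is exactly one ordered pair (h₂, h₃) ∈ H × H with h₃ − h₂ = a in ℤ/ℓ. Then for every nonzero k̄G-module homomorphism f: Y_{θ^a} → End_{k̄}(Y_θ), the image of f is not commutative under composition: there exist u, v ∈ Y_{θ^a} with f(u) ∘ f(v) ≠ f(v) ∘ f(u). -/

import Mathlib

open SemidirectProduct

/-- Conversion from additive automorphisms of `M` to multiplicative automorphisms of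
`Multiplicative M`. -/
def addAutToMulAut (M : Type) [AddGroup M] : Multiplicative (AddAut M) →* MulAut (Multiplicative M) where
  toFun e := AddEquiv.toMultiplicative e.toAdd
  map_one' := rfl
  map_mul' _ _ := rfl

/-- The semidirect product `G = (ℤ/ℓ) ⋊_ν (ℤ/q)`, where `s ∈ ℤ/q` acts on `ℤ/ℓ` by
multiplication by the unit `ν(s)`. -/
abbrev Gsd (q ℓ : ℕ) (ν : Multiplicative (ZMod q) →* (ZMod ℓ)ˣ) : Type :=
  Multiplicative (ZMod ℓ) ⋊[(addAutToMulAut (ZMod ℓ)).comp (AddAut.mulLeft.comp ν)]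
    Multiplicative (ZMod q)

/-- The generator `τ` of the subgroup `ℤ/ℓ` of `G`. -/
abbrev tauG (q ℓ : ℕ) (ν : Multiplicative (ZMod q) →* (ZMod ℓ)ˣ) : Gsd q ℓ ν :=
  SemidirectProduct.inl (Multiplicative.ofAdd (1 : ZMod ℓ))

/-- The generator `σ` of the subgroup `ℤ/q` of `G`. -/
abbrev sigmaG (q ℓ : ℕ) (ν : Multiplicative (ZMod q) →* (ZMod ℓ)ˣ) : Gsd q ℓ ν :=
  SemidirectProduct.inr (Multiplicative.ofAdd (1 : ZMod q))

/-- `ρ` (with basis `w`) is the representation `Y_λ` of `G = (ℤ/ℓ) ⋊_ν (ℤ/q)`: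
`σ·w_s = w_{s+1}` and `τ·w_s = λ(τ)^{ν(s)⁻¹}·w_s`. -/
def IsYRep (q ℓ : ℕ) {kbar : Type} [Field kbar]
    (ν : Multiplicative (ZMod q) →* (ZMod ℓ)ˣ)
    (lam : Multiplicative (ZMod ℓ) →* kbarˣ)
    {Y : Type} [AddCommGroup Y] [Module kbar Y]
    (ρ : Representation kbar (Gsd q ℓ ν) Y) (w : Module.Basis (ZMod q) kbar Y) : Prop :=
  (∀ s : ZMod q, ρ (sigmaG q ℓ ν) (w s) = w (s + 1)) ∧
  (∀ s : ZMod q, ρ (tauG q ℓ ν) (w s) =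
    (((lam (Multiplicative.ofAdd (1 : ZMod ℓ)) : kbarˣ) : kbar) ^
      ((((ν (Multiplicative.ofAdd s))⁻¹ : (ZMod ℓ)ˣ) : ZMod ℓ).val)) • w s)

/-- The homomorphism `θ^a : x ↦ θ(x)^a` for `a : ℤ/ℓ` (well defined on `ℓ`-th roots of
unity via `a.val`). -/
def powHom {kbar : Type} [Field kbar] {ℓ : ℕ} (θ : Multiplicative (ZMod ℓ) →* kbarˣ)
    (a : ZMod ℓ) : Multiplicative (ZMod ℓ) →* kbarˣ where
  toFun x := θ x ^ a.val
  map_one' := by simp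
  map_mul' x y := by simp [mul_pow]

/-- The space `Hom_{k̄G}(M₁, M₂)` of `G`-equivariant `k̄`-linear maps between two
representations. -/
def repHoms {kbar : Type} [Field kbar] {G : Type} [Group G] {M₁ M₂ : Type}
    [AddCommGroup M₁] [Module kbar M₁] [AddCommGroup M₂] [Module kbar M₂]
    (ρ₁ : Representation kbar G M₁) (ρ₂ : Representation kbar G M₂) :
    Submodule kbar (M₁ →ₗ[kbar] M₂) where
  carrier := {f | ∀ g : G, f ∘ₗ ρ₁ g = ρ₂ g ∘ₗ f}
  add_mem' := by
    intro a b ha hb g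
    simp only [LinearMap.add_comp, LinearMap.comp_add, ha g, hb g]
  zero_mem' := by intro g; simp
  smul_mem' := by
    intro c f hf g
    simp only [LinearMap.smul_comp, LinearMap.comp_smul, hf g]

/-- Under the multiplicity-one hypotheses, the image of any nonzero
`k̄G`-homomorphism `f : Y_{θ^a} → End_{k̄}(Y_θ)` is non-commutative under composition. -/
theorem image_of_hom_noncommutative (p q ℓ : ℕ) (hp : p.Prime) (hq : 1 < q) (hℓ : 1 < ℓ)
    (hqp : Nat.Coprime q p) (hℓp : Nat.Coprime ℓ p)
    (kbar : Type) [Field kbar] [IsAlgClosed kbar] [CharP kbar p]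
    (ν : Multiplicative (ZMod q) →* (ZMod ℓ)ˣ) (hν : Function.Injective ν)
    (θ : Multiplicative (ZMod ℓ) →* kbarˣ) (hθ : Function.Injective θ)
    (a : ZMod ℓ)
    (ha : ∀ h : (ZMod ℓ)ˣ, h ∈ ν.range → h ≠ 1 → ((h : ZMod ℓ) - 1) * a ≠ 0)
    (ha1 : ∃! hh : ↥ν.range × ↥ν.range,
      ((hh.2 : (ZMod ℓ)ˣ) : ZMod ℓ) - ((hh.1 : (ZMod ℓ)ˣ) : ZMod ℓ) = a)
    (Y : Type) [AddCommGroup Y] [Module kbar Y]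
    (ρ : Representation kbar (Gsd q ℓ ν) Y) (w : Module.Basis (ZMod q) kbar Y)
    (hY : IsYRep q ℓ ν θ ρ w)
    (Ya : Type) [AddCommGroup Ya] [Module kbar Ya]
    (ρa : Representation kbar (Gsd q ℓ ν) Ya) (wa : Module.Basis (ZMod q) kbar Ya)
    (hYa : IsYRep q ℓ ν (powHom θ a) ρa wa) :
    ∀ f : Ya →ₗ[kbar] (Y →ₗ[kbar] Y),
      f ∈ repHoms ρa (Representation.linHom ρ ρ) → f ≠ 0 →
      ∃ u v : Ya, (f u) ∘ₗ (f v) ≠ (f v) ∘ₗ (f u) := by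
  intro f hfmem hf0
  haveI : NeZero q := ⟨by omega⟩
  haveI : NeZero ℓ := ⟨by omega⟩
  haveI : Fact (1 < q) := ⟨hq⟩
  have hval : ∀ b : ZMod ℓ, ((b.val : ℕ) : ZMod ℓ) = b := ZMod.natCast_rightInverse
  have hvalq : ∀ b : ZMod q, ((b.val : ℕ) : ZMod q) = b := ZMod.natCast_rightInverse
  -- basic facts about θ
  have hinj : ∀ b c : ZMod ℓ, θ (Multiplicative.ofAdd b) = θ (Multiplicative.ofAdd c) → b = c :=
    fun b c h => Multiplicative.ofAdd.injective (hθ h)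
  have hpow : ∀ (b : ZMod ℓ) (n : ℕ),
      θ (Multiplicative.ofAdd b) ^ n = θ (Multiplicative.ofAdd ((n : ZMod ℓ) * b)) := by
    intro b n
    rw [← map_pow]
    congr 1
    rw [show (Multiplicative.ofAdd b) ^ n = Multiplicative.ofAdd (n • b) from rfl, nsmul_eq_mul]
  have hadd : ∀ b c : ZMod ℓ,
      θ (Multiplicative.ofAdd (b + c)) = θ (Multiplicative.ofAdd b) * θ (Multiplicative.ofAdd c) := by
    intro b c
    rw [← map_mul]
    rfl
  -- the eigenvalue functions
  set β : ZMod q → kbarˣ := fun t =>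
    θ (Multiplicative.ofAdd ((((ν (Multiplicative.ofAdd t))⁻¹ : (ZMod ℓ)ˣ) : ZMod ℓ))) with hβ
  set αc : ZMod q → kbarˣ := fun s =>
    θ (Multiplicative.ofAdd (((((ν (Multiplicative.ofAdd s))⁻¹ : (ZMod ℓ)ˣ) : ZMod ℓ)) * a)) with hαc
  have hρτ : ∀ t : ZMod q, ρ (tauG q ℓ ν) (w t) = ((β t : kbarˣ) : kbar) • w t := by
    intro t
    rw [hY.2 t]
    congr 1
    rw [← Units.val_pow_eq_pow_val]
    congr 1
    rw [hpow, mul_one, hval]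
  have hρaτ : ∀ s : ZMod q, ρa (tauG q ℓ ν) (wa s) = ((αc s : kbarˣ) : kbar) • wa s := by
    intro s
    rw [hYa.2 s]
    congr 1
    rw [← Units.val_pow_eq_pow_val]
    congr 1
    rw [show (powHom θ a) (Multiplicative.ofAdd (1 : ZMod ℓ))
        = θ (Multiplicative.ofAdd (1 : ZMod ℓ)) ^ a.val from rfl]
    rw [hpow, mul_one, hval, hpow, hval]
  -- coordinate functionals intertwine
  have hcτ : ∀ x : ZMod q,
      (w.coord x) ∘ₗ (ρ (tauG q ℓ ν)) = ((β x : kbarˣ) : kbar) • w.coord x := by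
    intro x
    apply w.ext
    intro t
    simp only [LinearMap.comp_apply, hρτ t, map_smul, LinearMap.smul_apply, smul_eq_mul,
      Module.Basis.coord_apply, Module.Basis.repr_self]
    rcases eq_or_ne t x with h | h
    · subst h; rfl
    · simp [Finsupp.single_apply, h]
  have hcσ : ∀ x : ZMod q,
      (w.coord x) ∘ₗ (ρ (sigmaG q ℓ ν)) = w.coord (x - 1) := by
    intro x
    apply w.ext
    intro t
    simp only [LinearMap.comp_apply, hY.1 t, Module.Basis.coord_apply, Module.Basis.repr_self,
      Finsupp.single_apply]
    simp only [eq_sub_iff_add_eq]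
  -- inverses compose to identity
  have hinvcomp : ∀ (g : Gsd q ℓ ν) (z : Y), ρ g⁻¹ (ρ g z) = z := by
    intro g z
    have : ρ g⁻¹ * ρ g = 1 := by rw [← map_mul, inv_mul_cancel, map_one]
    calc ρ g⁻¹ (ρ g z) = (ρ g⁻¹ * ρ g) z := rfl
      _ = z := by rw [this]; rfl
  have hf' : ∀ g : Gsd q ℓ ν, f ∘ₗ ρa g = (Representation.linHom ρ ρ) g ∘ₗ f := hfmem
  have hlin : ∀ (g : Gsd q ℓ ν) (T : Y →ₗ[kbar] Y),
      (Representation.linHom ρ ρ) g T = ρ g ∘ₗ T ∘ₗ ρ g⁻¹ := fun _ _ => rfl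
  -- the matrix entries
  set m : ZMod q → ZMod q → ZMod q → kbar := fun s x y => w.coord x (f (wa s) (w y)) with hm
  -- τ-equivariance on entries
  have hτeq : ∀ s x y : ZMod q,
      (((αc s : kbarˣ) : kbar) * ((β y : kbarˣ) : kbar)) * m s x y
        = ((β x : kbarˣ) : kbar) * m s x y := by
    intro s x y
    have h1 := LinearMap.congr_fun (hf' (tauG q ℓ ν)) (wa s)
    have h2 := congrArg (fun T : Y →ₗ[kbar] Y => w.coord x (T (ρ (tauG q ℓ ν) (w y)))) h1
    simp only [LinearMap.comp_apply, hlin] at h2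
    rw [hinvcomp] at h2
    rw [hρaτ s, map_smul, LinearMap.smul_apply, hρτ y, map_smul] at h2
    have h3 := LinearMap.congr_fun (hcτ x) (f (wa s) (w y))
    simp only [LinearMap.comp_apply, LinearMap.smul_apply, smul_eq_mul] at h3
    simp only [map_smul, smul_eq_mul] at h2
    rw [h3] at h2
    rw [mul_assoc]
    exact h2
  -- the exponent relation for nonzero entries
  have hsep : ∀ s x y : ZMod q, m s x y ≠ 0 →
      ((((ν (Multiplicative.ofAdd s))⁻¹ : (ZMod ℓ)ˣ) : ZMod ℓ)) * a
        + (((ν (Multiplicative.ofAdd y))⁻¹ : (ZMod ℓ)ˣ) : ZMod ℓ)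
        = (((ν (Multiplicative.ofAdd x))⁻¹ : (ZMod ℓ)ˣ) : ZMod ℓ) := by
    intro s x y hmne
    have h := mul_right_cancel₀ hmne (hτeq s x y)
    have h2 : αc s * β y = β x := Units.ext (by rw [Units.val_mul]; exact h)
    apply hinj
    rw [hadd]
    exact h2
  -- σ-equivariance on entries
  have hshift1 : ∀ s x y : ZMod q, m (s + 1) (x + 1) (y + 1) = m s x y := by
    intro s x y
    have h1 := LinearMap.congr_fun (hf' (sigmaG q ℓ ν)) (wa s)
    have h2 := congrArg
      (fun T : Y →ₗ[kbar] Y => w.coord (x + 1) (T (ρ (sigmaG q ℓ ν) (w y)))) h1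
    simp only [LinearMap.comp_apply, hlin] at h2
    rw [hinvcomp, hYa.1 s, hY.1 y] at h2
    have h3 := LinearMap.congr_fun (hcσ (x + 1)) (f (wa s) (w y))
    simp only [LinearMap.comp_apply] at h3
    rw [h3, add_sub_cancel_right] at h2
    exact h2
  have hshiftn : ∀ (n : ℕ) (s x y : ZMod q),
      m (s + (n : ZMod q)) (x + (n : ZMod q)) (y + (n : ZMod q)) = m s x y := by
    intro n
    induction n with
    | zero => intro s x y; simp
    | succ k ih =>
      intro s x y
      have : ((k + 1 : ℕ) : ZMod q) = (k : ZMod q) + 1 := by push_cast; ring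
      rw [this, ← add_assoc, ← add_assoc, ← add_assoc, hshift1, ih]
  have hshiftz : ∀ s x y : ZMod q, m s x y = m 0 (x - s) (y - s) := by
    intro s x y
    have h := hshiftn s.val 0 (x - s) (y - s)
    rw [hvalq, zero_add, sub_add_cancel, sub_add_cancel] at h
    exact h
  -- a nonzero entry exists
  have hex : ∃ s x y : ZMod q, m s x y ≠ 0 := by
    by_contra hcon
    push_neg at hcon
    apply hf0
    apply wa.ext
    intro s
    rw [LinearMap.zero_apply]
    apply w.ext
    intro y
    rw [LinearMap.zero_apply]
    exact (w.forall_coord_eq_zero_iff).mp fun x => hcon s x y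
  obtain ⟨s₀, x₀, y₀, hm0⟩ := hex
  set t₂ : ZMod q := x₀ - s₀ with ht₂
  set t₁ : ZMod q := y₀ - s₀ with ht₁
  set c : kbar := m 0 t₂ t₁ with hcdef
  have hc : c ≠ 0 := by rw [hcdef, ht₂, ht₁, ← hshiftz]; exact hm0
  -- value of the distinguished entry for every s
  have hdist : ∀ s : ZMod q, m s (t₂ + s) (t₁ + s) = c := by
    intro s
    rw [hshiftz, add_sub_cancel_right, add_sub_cancel_right]
  -- a ≠ 0
  have ha0 : a ≠ 0 := by
    have h1 : ν (Multiplicative.ofAdd (1 : ZMod q)) ≠ 1 := by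
      intro h
      have h2 : Multiplicative.ofAdd (1 : ZMod q) = 1 := hν (h.trans (map_one ν).symm)
      have h3 : (1 : ZMod q) = 0 := Multiplicative.ofAdd.injective h2
      exact one_ne_zero h3
    have h4 := ha (ν (Multiplicative.ofAdd (1 : ZMod q))) ⟨_, rfl⟩ h1
    intro h0
    exact h4 (by rw [h0, mul_zero])
  -- relation at s = 0
  have hrel0 := hsep 0 t₂ t₁ (by rw [← hcdef]; exact hc)
  have hν0 : (((ν (Multiplicative.ofAdd (0 : ZMod q)))⁻¹ : (ZMod ℓ)ˣ) : ZMod ℓ) = 1 := by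
    rw [show Multiplicative.ofAdd (0 : ZMod q) = 1 from rfl, map_one, inv_one, Units.val_one]
  have ht12 : t₁ ≠ t₂ := by
    intro h
    rw [h, hν0, one_mul] at hrel0
    exact ha0 (by linear_combination hrel0)
  -- uniqueness of the nonzero entry in each row
  have hmemr : ∀ s t : ZMod q,
      ν (Multiplicative.ofAdd s) * (ν (Multiplicative.ofAdd t))⁻¹ ∈ ν.range := by
    intro s t
    exact ⟨Multiplicative.ofAdd s * (Multiplicative.ofAdd t)⁻¹, by rw [map_mul, map_inv]⟩
  obtain ⟨hh₀, hP₀, hhu⟩ := ha1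
  have hpair : ∀ s x y : ZMod q,
      ((((ν (Multiplicative.ofAdd s))⁻¹ : (ZMod ℓ)ˣ) : ZMod ℓ)) * a
        + (((ν (Multiplicative.ofAdd y))⁻¹ : (ZMod ℓ)ˣ) : ZMod ℓ)
        = (((ν (Multiplicative.ofAdd x))⁻¹ : (ZMod ℓ)ˣ) : ZMod ℓ) →
      (⟨ν (Multiplicative.ofAdd s) * (ν (Multiplicative.ofAdd y))⁻¹, hmemr s y⟩,
        (⟨ν (Multiplicative.ofAdd s) * (ν (Multiplicative.ofAdd x))⁻¹, hmemr s x⟩ : ↥ν.range))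
        = hh₀ := by
    intro s x y hrel
    apply hhu
    show ((ν (Multiplicative.ofAdd s) * (ν (Multiplicative.ofAdd x))⁻¹ : (ZMod ℓ)ˣ) : ZMod ℓ)
      - ((ν (Multiplicative.ofAdd s) * (ν (Multiplicative.ofAdd y))⁻¹ : (ZMod ℓ)ˣ) : ZMod ℓ) = a
    rw [Units.val_mul, Units.val_mul, ← mul_sub, ← hrel, add_sub_cancel_right,
      ← mul_assoc, (ν (Multiplicative.ofAdd s)).mul_inv, one_mul]
  have hunique : ∀ s x y : ZMod q, m s x y ≠ 0 → x = t₂ + s ∧ y = t₁ + s := by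
    intro s x y hmne
    have h1 := hpair s x y (hsep s x y hmne)
    have h2 := hpair s (t₂ + s) (t₁ + s) (hsep s (t₂ + s) (t₁ + s) (by rw [hdist s]; exact hc))
    have h3 := h1.trans h2.symm
    have hy : ν (Multiplicative.ofAdd s) * (ν (Multiplicative.ofAdd y))⁻¹
        = ν (Multiplicative.ofAdd s) * (ν (Multiplicative.ofAdd (t₁ + s)))⁻¹ :=
      congrArg (fun z : ↥ν.range × ↥ν.range => (z.1 : (ZMod ℓ)ˣ)) h3
    have hx : ν (Multiplicative.ofAdd s) * (ν (Multiplicative.ofAdd x))⁻¹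
        = ν (Multiplicative.ofAdd s) * (ν (Multiplicative.ofAdd (t₂ + s)))⁻¹ :=
      congrArg (fun z : ↥ν.range × ↥ν.range => (z.2 : (ZMod ℓ)ˣ)) h3
    constructor
    · exact Multiplicative.ofAdd.injective (hν (inv_injective (mul_left_cancel hx)))
    · exact Multiplicative.ofAdd.injective (hν (inv_injective (mul_left_cancel hy)))
  -- assemble the final computation
  set d : ZMod q := t₁ - t₂ with hd
  have hd0 : d ≠ 0 := sub_ne_zero.mpr ht12
  have ht2d : t₂ + d = t₁ := by rw [hd]; ring
  have hvec : ∀ z z' : Y, (∀ x : ZMod q, w.coord x z = w.coord x z') → z = z' := by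
    intro z z' h
    apply w.repr.injective
    ext i
    simpa [Module.Basis.coord_apply] using h i
  have hcoordsmul : ∀ (cc : kbar) (t x : ZMod q),
      w.coord x (cc • w t) = if x = t then cc else 0 := by
    intro cc t x
    rw [map_smul, smul_eq_mul, Module.Basis.coord_apply, Module.Basis.repr_self, Finsupp.single_apply]
    rcases eq_or_ne x t with h | h
    · simp [h]
    · simp [h, Ne.symm h]
  have F1 : f (wa d) (w (t₁ + d)) = c • w t₁ := by
    apply hvec
    intro x
    rw [hcoordsmul]
    rcases eq_or_ne x t₁ with h | h
    · subst h
      rw [if_pos rfl]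
      have hdd := hdist d
      rw [ht2d] at hdd
      exact hdd
    · rw [if_neg h]
      by_contra hne
      obtain ⟨hx, _⟩ := hunique d x (t₁ + d) hne
      rw [ht2d] at hx
      exact h hx
  have F2 : f (wa 0) (w t₁) = c • w t₂ := by
    apply hvec
    intro x
    rw [hcoordsmul]
    rcases eq_or_ne x t₂ with h | h
    · subst h
      rw [if_pos rfl]
    · rw [if_neg h]
      by_contra hne
      obtain ⟨hx, _⟩ := hunique 0 x t₁ hne
      rw [add_zero] at hx
      exact h hx
  have F3 : f (wa 0) (w (t₁ + d)) = 0 := by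
    apply (w.forall_coord_eq_zero_iff).mp
    intro x
    by_contra hne
    obtain ⟨_, hy⟩ := hunique 0 x (t₁ + d) hne
    rw [add_zero] at hy
    exact hd0 (by linear_combination hy)
  refine ⟨wa 0, wa d, ?_⟩
  intro heq
  have h := LinearMap.congr_fun heq (w (t₁ + d))
  rw [LinearMap.comp_apply, LinearMap.comp_apply, F1, F3, (f (wa d)).map_zero,
    map_smul, F2, smul_smul] at h
  rcases smul_eq_zero.mp h with h' | h'
  · exact hc (mul_self_eq_zero.mp h')
  · exact w.ne_zero t₂ h'
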